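/- arXiv:1905.12194 — 4 statements merged into one kernel-verified Lean document; each statement's English description precedes it below -/
import Mathlib

section
/- The MMD between two push-forward measures T_x # μ and T_{x'} # μ is bounded by C · E_{θ∼μ}[L_θ] · ‖x − x'‖, where C depends only on the kernel; hence if E_{θ∼μ}[L_θ] < ∞ the map x ↦ T_x # μ is Lipschitz continuous in MMD metric. -/
open MeasureTheory NNReal

/-- MMD Lipschitz bound for push-forward measures. `T : X × Θ → ℝ^K` with
`T (·; θ)` Lipschitz of constant `L θ`, `E_μ[L] < ∞`, and the feature map `φ` of the kernel
satisfies `d_k(a,b) = ‖φ a - φ b‖ ≤ C ‖a - b‖`. The MMD between the push-forwards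
`T_x # μ` and `T_{x'} # μ`, i.e. the RKHS distance between their mean embeddings
`∫ φ (T x θ) ∂μ` and `∫ φ (T x' θ) ∂μ`, is bounded by `C * E_μ[L] * ‖x - x'‖`;
hence `x ↦ T_x # μ` is Lipschitz in the MMD metric. -/
theorem mmd_pushforward_lipschitz
    {X : Type*} [NormedAddCommGroup X] [NormedSpace ℝ X] [FiniteDimensional ℝ X]
    {Θ : Type*} [NormedAddCommGroup Θ] [NormedSpace ℝ Θ] [FiniteDimensional ℝ Θ]
    [MeasurableSpace Θ] {K : ℕ}
    {H : Type*} [NormedAddCommGroup H] [InnerProductSpace ℝ H] [CompleteSpace H]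
    (μ : Measure Θ) [IsProbabilityMeasure μ]
    (T : X → Θ → EuclideanSpace ℝ (Fin K))
    (L : Θ → ℝ≥0)
    (hT_lip : ∀ θ, LipschitzWith (L θ) (fun x => T x θ))
    (hL_int : Integrable (fun θ => (L θ : ℝ)) μ)
    (φ : EuclideanSpace ℝ (Fin K) → H)
    (C : ℝ) (hC : 0 ≤ C)
    (hφ : ∀ a b, ‖φ a - φ b‖ ≤ C * ‖a - b‖)
    (hφT_int : ∀ x, Integrable (fun θ => φ (T x θ)) μ) :
    ∀ x x' : X,
      ‖(∫ θ, φ (T x θ) ∂μ) - ∫ θ, φ (T x' θ) ∂μ‖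
        ≤ C * (∫ θ, (L θ : ℝ) ∂μ) * ‖x - x'‖ := by
  intro x x'
  rw [← integral_sub (hφT_int x) (hφT_int x')]
  calc ‖∫ θ, (φ (T x θ) - φ (T x' θ)) ∂μ‖
      ≤ ∫ θ, C * (L θ : ℝ) * ‖x - x'‖ ∂μ := by
        apply norm_integral_le_of_norm_le
        · exact (hL_int.const_mul C).mul_const _
        · filter_upwards with θ
          calc ‖φ (T x θ) - φ (T x' θ)‖ ≤ C * ‖T x θ - T x' θ‖ := hφ _ _
            _ ≤ C * ((L θ : ℝ) * ‖x - x'‖) := by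
                apply mul_le_mul_of_nonneg_left _ hC
                simpa [dist_eq_norm] using (hT_lip θ).dist_le_mul x x'
            _ = C * (L θ : ℝ) * ‖x - x'‖ := by ring
    _ = C * (∫ θ, (L θ : ℝ) ∂μ) * ‖x - x'‖ := by
        simp only [mul_assoc, integral_const_mul, integral_mul_const]
end

section
/- If X ∼ Gamma(a, 1) and Y ∼ Gamma(b, 1) are independent, then X/(X+Y) follows a Beta(a, b) distribution and is independent of X+Y, which follows Gamma(a+b, 1). -/
/-!
The joint density `x^(a-1) y^(b-1) e^(-(x+y)) / (Γ(a) Γ(b))` of `(X, Y)` is pushed forward along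
`(x, y) ↦ (x / (x + y), x + y)`, whose inverse `(u, s) ↦ (u s, (1 - u) s)` has Jacobian `s`.
The resulting density on `(0, 1) × (0, ∞)` factors as the Beta(a, b) density in `u` times the
Gamma(a + b, 1) density in `s`, so the law of the pair is the product of these two laws; this gives
both marginals and the independence. That the Beta density has total mass one is a by-product: the
product measure is the image of a probability measure.
-/

open MeasureTheory ProbabilityTheory

/-- The density of the Beta distribution with parameters `a, b` on `[0,1]`:
`t^(a-1) (1-t)^(b-1) / B(a,b)` where `B(a,b) = Γ(a) Γ(b) / Γ(a+b)`. -/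
noncomputable def betaPDFReal' (a b : ℝ) (t : ℝ) : ℝ :=
  if 0 < t ∧ t < 1 then
    (Real.Gamma (a + b) / (Real.Gamma a * Real.Gamma b))
      * t ^ (a - 1) * (1 - t) ^ (b - 1)
  else 0

/-- The Beta distribution with parameters `a, b` as a measure on `ℝ`. -/
noncomputable def betaMeasure' (a b : ℝ) : Measure ℝ :=
  volume.withDensity (fun t => ENNReal.ofReal (betaPDFReal' a b t))

open Set Real
open scoped ENNReal

section WithDensity

variable {α E : Type*} [MeasurableSpace α] {μ : Measure α}

theorem withDensity_eq_restrict_withDensity {f : α → ℝ≥0∞} {s : Set α} (hf : Measurable f)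
    (hs : MeasurableSet s) (h : ∀ᵐ x ∂μ, f x ≠ 0 → x ∈ s) :
    μ.withDensity f = (μ.restrict s).withDensity f := by
  rw [← restrict_withDensity hs, Measure.restrict_eq_self_of_ae_mem ((ae_withDensity_iff hf).2 h)]

variable [NormedAddCommGroup E] [NormedSpace ℝ E] [FiniteDimensional ℝ E] [MeasurableSpace E]
  [BorelSpace E] (ν : Measure E) [ν.IsAddHaarMeasure]

theorem map_restrict_image_withDensity {T g : E → E} {g' : E → E →L[ℝ] E} {s : Set E}
    (hT : Measurable T) (hs : MeasurableSet s) (hg' : ∀ x ∈ s, HasFDerivWithinAt g (g' x) s x)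
    (hTg : LeftInvOn T g s) (f : E → ℝ≥0∞) :
    ((ν.restrict (g '' s)).withDensity f).map T =
      (ν.restrict s).withDensity fun x => ENNReal.ofReal |(g' x).det| * f (g x) := by
  ext A hA
  rw [Measure.map_apply hT hA, withDensity_apply _ (hT hA), withDensity_apply _ hA,
    ← lintegral_indicator (hT hA), ← lintegral_indicator hA,
    lintegral_image_eq_lintegral_abs_det_fderiv_mul ν hs hg' hTg.injOn]
  refine setLIntegral_congr_fun hs fun x hx => ?_
  by_cases hxA : x ∈ A <;> simp [indicator, hTg hx, hxA]

end WithDensity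

section RatioSum

noncomputable def ratioSum (p : ℝ × ℝ) : ℝ × ℝ := (p.1 / (p.1 + p.2), p.1 + p.2)

def ratioSumInv (q : ℝ × ℝ) : ℝ × ℝ := (q.1 * q.2, (1 - q.1) * q.2)

theorem measurable_ratioSum : Measurable ratioSum := by
  unfold ratioSum; fun_prop

theorem invOn_ratioSum :
    InvOn ratioSum ratioSumInv (Ioo 0 1 ×ˢ Ioi 0) (Ioi 0 ×ˢ Ioi 0) := by
  constructor
  · rintro ⟨u, s⟩ ⟨-, hs : 0 < s⟩
    simp only [ratioSum, ratioSumInv, Prod.mk.injEq]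
    constructor <;> field_simp <;> ring
  · rintro ⟨x, y⟩ ⟨hx : 0 < x, hy : 0 < y⟩
    simp only [ratioSum, ratioSumInv, Prod.mk.injEq]
    constructor <;> field_simp
    ring

theorem bijOn_ratioSumInv : BijOn ratioSumInv (Ioo 0 1 ×ˢ Ioi 0) (Ioi 0 ×ˢ Ioi 0) := by
  refine invOn_ratioSum.bijOn ?_ ?_
  · rintro ⟨u, s⟩ ⟨⟨hu0, hu1⟩, hs : 0 < s⟩
    exact ⟨mul_pos hu0 hs, mul_pos (sub_pos.2 hu1) hs⟩
  · rintro ⟨x, y⟩ ⟨hx : 0 < x, hy : 0 < y⟩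
    have hxy : 0 < x + y := by positivity
    exact ⟨⟨div_pos hx hxy, (div_lt_one hxy).2 (by linarith)⟩, hxy⟩

noncomputable def ratioSumInvDeriv (q : ℝ × ℝ) : ℝ × ℝ →L[ℝ] ℝ × ℝ :=
  (q.2 • ContinuousLinearMap.fst ℝ ℝ ℝ + q.1 • ContinuousLinearMap.snd ℝ ℝ ℝ).prod
    (-q.2 • ContinuousLinearMap.fst ℝ ℝ ℝ + (1 - q.1) • ContinuousLinearMap.snd ℝ ℝ ℝ)

theorem hasFDerivAt_ratioSumInv (q : ℝ × ℝ) :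
    HasFDerivAt ratioSumInv (ratioSumInvDeriv q) q := by
  refine ((hasFDerivAt_fst.mul hasFDerivAt_snd).prodMk
    (((hasFDerivAt_const (1 : ℝ) q).sub hasFDerivAt_fst).mul hasFDerivAt_snd)).congr_fderiv ?_
  ext <;> simp [ratioSumInvDeriv]

theorem det_ratioSumInvDeriv (q : ℝ × ℝ) : (ratioSumInvDeriv q).det = q.2 := by
  rw [ContinuousLinearMap.det, ← LinearMap.det_toMatrix (Module.Basis.finTwoProd ℝ),
    Matrix.det_fin_two]
  simp [LinearMap.toMatrix_apply, ratioSumInvDeriv]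
  ring

end RatioSum

section Densities

theorem measurable_betaPDFReal' (a b : ℝ) : Measurable (betaPDFReal' a b) := by
  unfold betaPDFReal'
  exact Measurable.ite (measurableSet_Ioi.inter measurableSet_Iio) (by fun_prop) measurable_const

theorem betaMeasure'_eq_restrict_withDensity (a b : ℝ) :
    betaMeasure' a b =
      (volume.restrict (Ioo 0 1)).withDensity fun t => ENNReal.ofReal (betaPDFReal' a b t) := by
  refine withDensity_eq_restrict_withDensity (measurable_betaPDFReal' a b).ennreal_ofReal
    measurableSet_Ioo (ae_of_all _ fun t ht => ?_)
  by_contra hmem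
  simp [betaPDFReal', show ¬(0 < t ∧ t < 1) from hmem] at ht

theorem gammaMeasure_eq_restrict_withDensity (a r : ℝ) :
    gammaMeasure a r = (volume.restrict (Ioi 0)).withDensity (gammaPDF a r) := by
  refine withDensity_eq_restrict_withDensity (measurable_gammaPDFReal a r).ennreal_ofReal
    measurableSet_Ioi ?_
  filter_upwards [Measure.ae_ne volume 0] with x hx0 hx
  exact lt_of_le_of_ne (not_lt.1 fun hneg => hx (gammaPDF_of_neg hneg)) hx0.symm

theorem gammaPDFReal_mul_gammaPDFReal {a b u s : ℝ} (ha : 0 < a) (hb : 0 < b)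
    (hu0 : 0 < u) (hu1 : u < 1) (hs : 0 < s) :
    s * (gammaPDFReal a 1 (u * s) * gammaPDFReal b 1 ((1 - u) * s)) =
      betaPDFReal' a b u * gammaPDFReal (a + b) 1 s := by
  have h1u : 0 < 1 - u := sub_pos.2 hu1
  have hexp : exp (-(s * u)) * exp (-(s * (1 - u))) = exp (-s) := by
    rw [← exp_add]; ring_nf
  have hpow : s ^ (a - 1) * s ^ (b - 1) * s = s ^ (a + b - 1) := by
    rw [← rpow_add hs, ← rpow_add_one hs.ne']; ring_nf
  simp only [gammaPDFReal, betaPDFReal', if_pos (mul_pos hu0 hs).le, if_pos (mul_pos h1u hs).le,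
    if_pos hs.le, if_pos (And.intro hu0 hu1), one_rpow, one_mul,
    mul_rpow hu0.le hs.le, mul_rpow h1u.le hs.le]
  field_simp
  linear_combination (s ^ (a - 1) * s ^ (b - 1) * s) * hexp + exp (-s) * hpow

end Densities

theorem map_ratioSum_gammaMeasure_prod {a b : ℝ} (ha : 0 < a) (hb : 0 < b) :
    ((gammaMeasure a 1).prod (gammaMeasure b 1)).map ratioSum =
      (betaMeasure' a b).prod (gammaMeasure (a + b) 1) := by
  have hγ (c : ℝ) : Measurable (gammaPDF c 1) := (measurable_gammaPDFReal c 1).ennreal_ofReal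
  have hβ : Measurable fun t => ENNReal.ofReal (betaPDFReal' a b t) :=
    (measurable_betaPDFReal' a b).ennreal_ofReal
  rw [gammaMeasure_eq_restrict_withDensity, gammaMeasure_eq_restrict_withDensity,
    betaMeasure'_eq_restrict_withDensity, gammaMeasure_eq_restrict_withDensity,
    prod_withDensity (hγ a) (hγ b), prod_withDensity hβ (hγ (a + b)),
    Measure.prod_restrict, Measure.prod_restrict, ← Measure.volume_eq_prod,
    ← bijOn_ratioSumInv.image_eq,
    map_restrict_image_withDensity volume measurable_ratioSum
      (measurableSet_Ioo.prod measurableSet_Ioi)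
      (fun q _ => (hasFDerivAt_ratioSumInv q).hasFDerivWithinAt) invOn_ratioSum.1]
  refine withDensity_congr_ae <|
    (ae_restrict_iff' (measurableSet_Ioo.prod measurableSet_Ioi)).2 <|
      ae_of_all _ fun ⟨u, s⟩ ⟨⟨hu0, hu1⟩, hs⟩ => ?_
  simp only [det_ratioSumInvDeriv, ratioSumInv, gammaPDF]
  rw [abs_of_pos hs, ← ENNReal.ofReal_mul (gammaPDFReal_nonneg ha one_pos _),
    ← ENNReal.ofReal_mul hs.le,
    ← ENNReal.ofReal_mul' (gammaPDFReal_nonneg (add_pos ha hb) one_pos _),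
    gammaPDFReal_mul_gammaPDFReal ha hb hu0 hu1 hs]

section Independence

variable {Ω α β : Type*} [MeasurableSpace Ω] [MeasurableSpace α] [MeasurableSpace β]
  {P : Measure Ω} {μ : Measure α} {ν : Measure β}

theorem map_eq_and_indepFun_of_map_prod_eq_prod [IsProbabilityMeasure μ] [IsProbabilityMeasure ν]
    {Z : Ω → α} {W : Ω → β} (hZ : Measurable Z) (hW : Measurable W)
    (h : P.map (fun ω => (Z ω, W ω)) = μ.prod ν) :
    P.map Z = μ ∧ IndepFun Z W P ∧ P.map W = ν := by
  have hZ_law : P.map Z = μ := by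
    have := congrArg (Measure.map Prod.fst) h
    rwa [Measure.map_map measurable_fst (hZ.prodMk hW), Measure.map_fst_prod, measure_univ,
      one_smul] at this
  have hW_law : P.map W = ν := by
    have := congrArg (Measure.map Prod.snd) h
    rwa [Measure.map_map measurable_snd (hZ.prodMk hW), Measure.map_snd_prod, measure_univ,
      one_smul] at this
  refine ⟨hZ_law, ?_, hW_law⟩
  rw [indepFun_iff_map_prod_eq_prod_map_map' hZ.aemeasurable hW.aemeasurable
    (by rw [hZ_law]; infer_instance) (by rw [hW_law]; infer_instance), h, hZ_law, hW_law]

end Independence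

theorem isProbabilityMeasure_betaMeasure' {a b : ℝ} (ha : 0 < a) (hb : 0 < b) :
    IsProbabilityMeasure (betaMeasure' a b) := by
  have := isProbabilityMeasure_gammaMeasure ha one_pos
  have := isProbabilityMeasure_gammaMeasure hb one_pos
  have := isProbabilityMeasure_gammaMeasure (add_pos ha hb) one_pos
  have hprod := (Measure.isProbabilityMeasure_map measurable_ratioSum.aemeasurable
    (μ := (gammaMeasure a 1).prod (gammaMeasure b 1))).measure_univ
  rw [map_ratioSum_gammaMeasure_prod ha hb, ← univ_prod_univ, Measure.prod_prod,
    measure_univ (μ := gammaMeasure (a + b) 1), mul_one] at hprod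
  exact ⟨hprod⟩

/-- if `X ∼ Gamma(a,1)` and `Y ∼ Gamma(b,1)` are independent, then
`X/(X+Y) ∼ Beta(a,b)`, `X/(X+Y)` is independent of `X+Y`, and `X+Y ∼ Gamma(a+b,1)`. -/
theorem gamma_ratio_beta
    {Ω : Type*} [MeasurableSpace Ω] (P : Measure Ω) [IsProbabilityMeasure P]
    (a b : ℝ) (ha : 0 < a) (hb : 0 < b)
    (X Y : Ω → ℝ) (hX : Measurable X) (hY : Measurable Y)
    (hXY : IndepFun X Y P)
    (hXgamma : Measure.map X P = gammaMeasure a 1)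
    (hYgamma : Measure.map Y P = gammaMeasure b 1) :
    Measure.map (fun ω => X ω / (X ω + Y ω)) P = betaMeasure' a b ∧
    IndepFun (fun ω => X ω / (X ω + Y ω)) (fun ω => X ω + Y ω) P ∧
    Measure.map (fun ω => X ω + Y ω) P = gammaMeasure (a + b) 1 := by
  have := isProbabilityMeasure_betaMeasure' ha hb
  have := isProbabilityMeasure_gammaMeasure (add_pos ha hb) one_pos
  have hXY_law : P.map (fun ω => (X ω, Y ω)) = (gammaMeasure a 1).prod (gammaMeasure b 1) := by
    rw [← hXgamma, ← hYgamma]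
    exact (indepFun_iff_map_prod_eq_prod_map_map hX.aemeasurable hY.aemeasurable).1 hXY
  refine map_eq_and_indepFun_of_map_prod_eq_prod (hX.div (hX.add hY)) (hX.add hY) ?_
  rw [← map_ratioSum_gammaMeasure_prod ha hb, ← hXY_law,
    Measure.map_map measurable_ratioSum (hX.prodMk hY)]
  rfl
end

section
/- The Kantorovich–Rubinstein duality: for probability measures p, q on a compact metric space, the 1-Wasserstein distance equals sup over 1-Lipschitz functions ψ of E_p[ψ] − E_q[ψ]. -/
/-!
Weak duality is the bound `ψ x - ψ y ≤ dist x y` integrated against a coupling. For the converse,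
quantize `S` by a measurable map `f` onto finitely many centres `x i` at distance `< δ`. Any
coupling `γ` of the cell masses of `p` and `q` lifts to a coupling of `p` and `q` (spread
`γ (i, j)` over the product of the conditional measures on the cells `i` and `j`) costing at most
`∑ γ (i, j) * dist (x i) (x j) + 2δ`, so every discrete coupling costs at least `W - 2δ`, where
`W` is the infimal transport cost.
Finite-dimensional LP duality, obtained by separating a point from the compact convex image of the
simplex, gives potentials `u i + w j ≤ dist (x i) (x j)` of value `W - 3δ`, and
`ψ y = min_j (dist y (x j) - w j)` is 1-Lipschitz with `u i ≤ ψ (x i)` and `ψ (x j) ≤ -w j`,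
so `∫ ψ ∂p - ∫ ψ ∂q ≥ W - 5δ`.
-/

open MeasureTheory ProbabilityTheory Metric Set

section DiscreteTransport

variable {ι κ : Type*} [Fintype ι] [Fintype κ]

structure IsDiscreteCoupling (a : ι → ℝ) (b : κ → ℝ) (γ : ι × κ → ℝ) : Prop where
  nonneg : ∀ z, 0 ≤ γ z
  row_sum : ∀ i, ∑ j, γ (i, j) = a i
  col_sum : ∀ j, ∑ i, γ (i, j) = b j

namespace IsDiscreteCoupling

variable {a : ι → ℝ} {b : κ → ℝ} {γ : ι × κ → ℝ}

lemma prod (ha : ∀ i, 0 ≤ a i) (hb : ∀ j, 0 ≤ b j) (hsa : ∑ i, a i = 1) (hsb : ∑ j, b j = 1) :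
    IsDiscreteCoupling a b fun z => a z.1 * b z.2 where
  nonneg _ := mul_nonneg (ha _) (hb _)
  row_sum _ := by simp only [← Finset.mul_sum, hsb, mul_one]
  col_sum _ := by simp only [← Finset.sum_mul, hsa, one_mul]

lemma swap (hγ : IsDiscreteCoupling a b γ) : IsDiscreteCoupling b a (γ ∘ Prod.swap) :=
  ⟨fun z => hγ.nonneg z.swap, hγ.col_sum, hγ.row_sum⟩

lemma le_right (hγ : IsDiscreteCoupling a b γ) (z : ι × κ) : γ z ≤ b z.2 :=
  hγ.col_sum z.2 ▸ Finset.single_le_sum (fun i _ => hγ.nonneg (i, z.2)) (Finset.mem_univ z.1)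

lemma mem_stdSimplex (hγ : IsDiscreteCoupling a b γ) (hsa : ∑ i, a i = 1) :
    γ ∈ stdSimplex ℝ (ι × κ) :=
  ⟨hγ.nonneg, by rw [Fintype.sum_prod_type]; simp only [hγ.row_sum, hsa]⟩

end IsDiscreteCoupling

def marginalsCostₗ (c : ι → κ → ℝ) : (ι × κ → ℝ) →ₗ[ℝ] (ι → ℝ) × (κ → ℝ) × ℝ where
  toFun γ := (fun i => ∑ j, γ (i, j), fun j => ∑ i, γ (i, j), ∑ z, γ z * c z.1 z.2)
  map_add' γ γ' := by
    simp only [Pi.add_apply, add_mul, Finset.sum_add_distrib, Prod.mk_add_mk]; rfl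
  map_smul' t γ := by
    simp only [Pi.smul_apply, smul_eq_mul, mul_assoc, ← Finset.mul_sum, RingHom.id_apply,
      Prod.smul_mk]; rfl

lemma IsDiscreteCoupling.marginalsCostₗ_apply {a : ι → ℝ} {b : κ → ℝ} {γ : ι × κ → ℝ}
    (hγ : IsDiscreteCoupling a b γ) (c : ι → κ → ℝ) :
    marginalsCostₗ c γ = (a, b, ∑ z, γ z * c z.1 z.2) := by
  simp only [marginalsCostₗ, LinearMap.coe_mk, AddHom.coe_mk, hγ.row_sum, hγ.col_sum]

lemma marginalsCostₗ_single [DecidableEq ι] [DecidableEq κ] (c : ι → κ → ℝ) (i : ι) (j : κ) :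
    marginalsCostₗ c (Pi.single (i, j) 1) = (Pi.single i 1, Pi.single j 1, c i j) := by
  ext
  · simp [marginalsCostₗ, Pi.single_apply, Prod.ext_iff, ite_and]
  · simp [marginalsCostₗ, Pi.single_apply, Prod.ext_iff, ite_and]
  · simp [marginalsCostₗ, Pi.single_apply, ite_mul]

lemma ContinuousLinearMap.apply_pi_prod_eq_sum [DecidableEq ι] [DecidableEq κ]
    (f : (ι → ℝ) × (κ → ℝ) × ℝ →L[ℝ] ℝ) (x : ι → ℝ) (y : κ → ℝ) (t : ℝ) :
    f (x, y, t) = ∑ i, x i * f (Pi.single i 1, 0, 0)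
      + ∑ j, y j * f (0, Pi.single j 1, 0) + t * f (0, 0, 1) := by
  have hxyt : (x, y, t) = ∑ i, x i • ((Pi.single i 1 : ι → ℝ), (0 : κ → ℝ), (0 : ℝ))
      + ∑ j, y j • ((0 : ι → ℝ), (Pi.single j 1 : κ → ℝ), (0 : ℝ)) + t • (0, 0, 1) := by
    ext <;> simp [Prod.fst_sum, Prod.snd_sum, Finset.sum_apply, Pi.single_apply]
  conv_lhs => rw [hxyt]
  simp only [map_add, map_sum, map_smul, smul_eq_mul]

theorem exists_dual_eq_of_lt_cost (c : ι → κ → ℝ) {a : ι → ℝ} {b : κ → ℝ}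
    (ha : ∀ i, 0 ≤ a i) (hb : ∀ j, 0 ≤ b j) (hsa : ∑ i, a i = 1) (hsb : ∑ j, b j = 1) {r : ℝ}
    (hr : ∀ γ, IsDiscreteCoupling a b γ → r < ∑ z, γ z * c z.1 z.2) :
    ∃ (u : ι → ℝ) (w : κ → ℝ), (∀ i j, u i + w j ≤ c i j) ∧
      ∑ i, a i * u i + ∑ j, b j * w j = r := by
  classical
  set L := marginalsCostₗ c
  have hnot : (a, b, r) ∉ L '' stdSimplex ℝ (ι × κ) := by
    rintro ⟨γ, hγ, hLγ⟩
    simp only [L, marginalsCostₗ, LinearMap.coe_mk, AddHom.coe_mk, Prod.mk.injEq] at hLγ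
    obtain ⟨hrow, hcol, hcost⟩ := hLγ
    exact (hr γ ⟨hγ.1, congrFun hrow, congrFun hcol⟩).ne' hcost
  obtain ⟨f, t, hft, htf⟩ := geometric_hahn_banach_closed_point
    ((convex_stdSimplex ℝ _).linear_image L)
    ((isCompact_stdSimplex _ _).image L.continuous_of_finiteDimensional).isClosed hnot
  have hsep : ∀ γ ∈ stdSimplex ℝ (ι × κ), f (L γ) < f (a, b, r) :=
    fun γ hγ => (hft _ ⟨γ, hγ, rfl⟩).trans htf
  set α : ι → ℝ := fun i => f (Pi.single i 1, 0, 0)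
  set β : κ → ℝ := fun j => f (0, Pi.single j 1, 0)
  set s := f (0, 0, 1)
  set A := ∑ i, a i * α i
  set B := ∑ j, b j * β j
  have hfab : f (a, b, r) = A + B + r * s := f.apply_pi_prod_eq_sum a b r
  have hvertex : ∀ i j, α i + β j + c i j * s < A + B + r * s := by
    intro i j
    have := hsep _ (single_mem_stdSimplex ℝ (i, j))
    rw [marginalsCostₗ_single, f.apply_pi_prod_eq_sum, hfab] at this
    simpa [Pi.single_apply] using this
  have hs : s < 0 := by
    have hprod := IsDiscreteCoupling.prod ha hb hsa hsb
    have := hsep _ (hprod.mem_stdSimplex hsa)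
    rw [hprod.marginalsCostₗ_apply, f.apply_pi_prod_eq_sum, hfab] at this
    nlinarith [hr _ hprod]
  -- dividing `hvertex i j` by `-s > 0` gives `u i + w j < c i j`
  refine ⟨fun i => r + (α i - A) / -s, fun j => (β j - B) / -s, fun i j => ?_, ?_⟩
  · have : (α i - A + (β j - B)) / -s < c i j - r := by
      rw [div_lt_iff₀ (neg_pos.2 hs)]; linarith [hvertex i j]
    dsimp only
    linarith [add_div (α i - A) (β j - B) (-s)]
  · simp only [mul_add, mul_div_assoc', mul_sub, Finset.sum_add_distrib, ← Finset.sum_div,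
      Finset.sum_sub_distrib, ← Finset.sum_mul, hsa, hsb, one_mul]
    simp [A, B]

end DiscreteTransport

lemma isProbabilityMeasure_cond_of_measureReal_pos {Ω : Type*} [MeasurableSpace Ω]
    {μ : Measure Ω} [IsFiniteMeasure μ] {s : Set Ω} (hs : 0 < μ.real s) :
    IsProbabilityMeasure μ[|s] :=
  cond_isProbabilityMeasure fun h => hs.ne' (by simp [measureReal_def, h])

lemma sum_measureReal_fiber_eq_one {X ι : Type*} [MeasurableSpace X] [Fintype ι]
    [MeasurableSpace ι] [MeasurableSingletonClass ι] {μ : Measure X} [IsProbabilityMeasure μ]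
    {f : X → ι} (hf : Measurable f) : ∑ i, μ.real (f ⁻¹' {i}) = 1 := by
  rw [sum_measureReal_preimage_singleton _ fun i _ => hf (measurableSet_singleton i),
    Finset.coe_univ, preimage_univ, probReal_univ]

lemma sum_measureReal_fiber_mul_le_integral {X ι : Type*} [MeasurableSpace X] [Fintype ι]
    [MeasurableSpace ι] [DiscreteMeasurableSpace ι] {μ : Measure X} [IsFiniteMeasure μ]
    {f : X → ι} (hf : Measurable f) {h : ι → ℝ} {ψ : X → ℝ} (hψ : Integrable ψ μ)
    (hle : ∀ y, h (f y) ≤ ψ y) :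
    ∑ i, μ.real (f ⁻¹' {i}) * h i ≤ ∫ y, ψ y ∂μ :=
  calc ∑ i, μ.real (f ⁻¹' {i}) * h i = ∫ y, h (f y) ∂μ := by
        rw [← integral_map hf.aemeasurable Measurable.of_discrete.aestronglyMeasurable,
          integral_fintype Integrable.of_finite]
        simp [map_measureReal_apply hf (measurableSet_singleton _)]
    _ ≤ ∫ y, ψ y ∂μ := integral_mono (Integrable.of_finite.comp_measurable hf) hψ hle

lemma Continuous.integrable_of_compactSpace {X E : Type*} [TopologicalSpace X] [CompactSpace X]
    [MeasurableSpace X] [OpensMeasurableSpace X] [NormedAddCommGroup E] {μ : Measure X}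
    [IsFiniteMeasure μ] {f : X → E} (hf : Continuous f) : Integrable f μ :=
  hf.integrable_of_hasCompactSupport (isClosed_tsupport f).isCompact

section BlockCoupling

variable {X Y ι κ : Type*} [MeasurableSpace X] [MeasurableSpace Y] [Fintype ι] [Fintype κ]

noncomputable def blockCoupling (p : Measure X) (q : Measure Y) (f : X → ι) (g : Y → κ)
    (γ : ι × κ → ℝ) : Measure (X × Y) :=
  ∑ z, ENNReal.ofReal (γ z) • (p[|f ← z.1]).prod (q[|g ← z.2])

variable {p : Measure X} {q : Measure Y} {f : X → ι} {g : Y → κ} {γ : ι × κ → ℝ}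

lemma blockCoupling_map_fst [IsFiniteMeasure p] [IsFiniteMeasure q] [MeasurableSpace ι]
    [DiscreteMeasurableSpace ι] (hf : Measurable f)
    (hγ : IsDiscreteCoupling (fun i => p.real (f ⁻¹' {i})) (fun j => q.real (g ⁻¹' {j})) γ) :
    (blockCoupling p q f g γ).map Prod.fst = p := by
  have hmass : ∀ z : ι × κ, ENNReal.ofReal (γ z) * q[|g ← z.2] univ = ENNReal.ofReal (γ z) := by
    intro z
    rcases (hγ.nonneg z).eq_or_lt with h | h
    · simp [← h]
    · have := isProbabilityMeasure_cond_of_measureReal_pos (h.trans_le (hγ.le_right z))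
      rw [measure_univ, mul_one]
  rw [blockCoupling, Measure.map_finset_sum measurable_fst.aemeasurable]
  simp only [Measure.map_smul, Measure.map_fst_prod, smul_smul, hmass]
  conv_rhs => rw [← sum_meas_smul_cond_fiber hf p]
  rw [Fintype.sum_prod_type]
  refine Finset.sum_congr rfl fun i _ => ?_
  dsimp only
  rw [← Finset.sum_smul, ← ENNReal.ofReal_sum_of_nonneg fun j _ => hγ.nonneg (i, j),
    hγ.row_sum, ofReal_measureReal]

lemma blockCoupling_map_swap :
    (blockCoupling p q f g γ).map Prod.swap = blockCoupling q p g f (γ ∘ Prod.swap) := by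
  rw [blockCoupling, Measure.map_finset_sum measurable_swap.aemeasurable]
  simp only [Measure.map_smul, Measure.prod_swap]
  exact Fintype.sum_equiv (Equiv.prodComm ι κ) _ _ fun _ => rfl

lemma blockCoupling_map_snd [IsFiniteMeasure p] [IsFiniteMeasure q] [MeasurableSpace κ]
    [DiscreteMeasurableSpace κ] (hg : Measurable g)
    (hγ : IsDiscreteCoupling (fun i => p.real (f ⁻¹' {i})) (fun j => q.real (g ⁻¹' {j})) γ) :
    (blockCoupling p q f g γ).map Prod.snd = q :=
  calc (blockCoupling p q f g γ).map Prod.snd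
      = ((blockCoupling p q f g γ).map Prod.swap).map Prod.fst := by
        rw [Measure.map_map measurable_fst measurable_swap]; rfl
    _ = q := by rw [blockCoupling_map_swap]; exact blockCoupling_map_fst hg hγ.swap

end BlockCoupling

section MetricSpace

variable {S : Type*} [MetricSpace S]

lemma lipschitzWith_one_ciInf_dist_sub {ι : Type*} [Finite ι] [Nonempty ι] (x : ι → S)
    (w : ι → ℝ) : LipschitzWith 1 fun y => ⨅ j, dist y (x j) - w j :=
  LipschitzWith.of_le_add fun y y' => by
    rw [← sub_le_iff_le_add]
    refine le_ciInf fun j => ?_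
    have := ciInf_le (Finite.bddBelow_range fun j => dist y (x j) - w j) j
    linarith [dist_triangle y y' (x j)]

variable [MeasurableSpace S]

theorem exists_measurable_quantizer [CompactSpace S] [Nonempty S] [OpensMeasurableSpace S]
    {δ : ℝ} (hδ : 0 < δ) :
    ∃ (n : ℕ) (x : Fin n → S) (f : S → Fin n), Measurable f ∧ ∀ y, dist y (x (f y)) < δ := by
  set e := TopologicalSpace.denseSeq S
  obtain ⟨t, ht⟩ := isCompact_univ.elim_finite_subcover (fun k => ball (e k) δ)
    (fun _ => isOpen_ball) fun y _ =>
      mem_iUnion.2 (Metric.denseRange_iff.1 (TopologicalSpace.denseRange_denseSeq S) y δ hδ)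
  set N := t.sup id
  refine ⟨N + 1, fun k => e k,
    fun y => ⟨SimpleFunc.nearestPtInd e N y, Nat.lt_succ_of_le (SimpleFunc.nearestPtInd_le _ _ _)⟩,
    measurable_to_countable' fun k => ?_, fun y => ?_⟩
  · convert (SimpleFunc.nearestPtInd e N).measurableSet_fiber k.val using 1
    ext y
    simp [Fin.ext_iff]
  · obtain ⟨k, hk, hy⟩ := mem_iUnion₂.1 (ht (mem_univ y))
    have := SimpleFunc.edist_nearestPt_le e y (Finset.le_sup (f := id) hk)
    rw [edist_dist, edist_dist, ENNReal.ofReal_le_ofReal_iff dist_nonneg] at this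
    rw [dist_comm]
    exact this.trans_lt (mem_ball'.1 hy)

lemma lintegral_dist_prod_cond_le {ι κ : Type*} [MeasurableSpace ι] [MeasurableSingletonClass ι]
    [MeasurableSpace κ] [MeasurableSingletonClass κ] {p q : Measure S} {f : S → ι} {g : S → κ}
    (hf : Measurable f) (hg : Measurable g) {x : ι → S} {x' : κ → S} {δ : ℝ}
    (hx : ∀ y, dist y (x (f y)) ≤ δ) (hx' : ∀ y, dist y (x' (g y)) ≤ δ) (i : ι) (j : κ) :
    ∫⁻ z, ENNReal.ofReal (dist z.1 z.2) ∂(p[|f ← i]).prod (q[|g ← j])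
      ≤ ENNReal.ofReal (dist (x i) (x' j) + 2 * δ) := by
  have hae : ∀ᵐ z ∂(p[|f ← i]).prod (q[|g ← j]),
      ENNReal.ofReal (dist z.1 z.2) ≤ ENNReal.ofReal (dist (x i) (x' j) + 2 * δ) := by
    filter_upwards
      [Measure.quasiMeasurePreserving_fst.ae (ae_cond_mem (hf (measurableSet_singleton i))),
        Measure.quasiMeasurePreserving_snd.ae (ae_cond_mem (hg (measurableSet_singleton j)))]
      with z (hz₁ : f z.1 = i) (hz₂ : g z.2 = j)
    gcongr
    have h₁ := hx z.1
    have h₂ := hx' z.2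
    rw [hz₁] at h₁
    rw [hz₂, dist_comm] at h₂
    linarith [dist_triangle4 z.1 (x i) (x' j) z.2]
  calc _ ≤ ∫⁻ _, ENNReal.ofReal (dist (x i) (x' j) + 2 * δ) ∂(p[|f ← i]).prod (q[|g ← j]) :=
        lintegral_mono_ae hae
    _ ≤ _ := by
      rw [lintegral_const, ← univ_prod_univ, Measure.prod_prod]
      exact mul_le_of_le_one_right' (mul_le_one' prob_le_one prob_le_one)

lemma integral_dist_blockCoupling_le [SecondCountableTopology S] [OpensMeasurableSpace S]
    {ι κ : Type*} [Fintype ι] [Fintype κ] [MeasurableSpace ι] [MeasurableSingletonClass ι]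
    [MeasurableSpace κ] [MeasurableSingletonClass κ] {p q : Measure S} {f : S → ι} {g : S → κ}
    (hf : Measurable f) (hg : Measurable g) {x : ι → S} {x' : κ → S} {δ : ℝ} (hδ : 0 ≤ δ)
    (hx : ∀ y, dist y (x (f y)) ≤ δ) (hx' : ∀ y, dist y (x' (g y)) ≤ δ) {γ : ι × κ → ℝ}
    (hγ : ∀ z, 0 ≤ γ z) :
    ∫ z, dist z.1 z.2 ∂blockCoupling p q f g γ ≤ ∑ z, γ z * (dist (x z.1) (x' z.2) + 2 * δ) := by
  have hterm : ∀ z : ι × κ, 0 ≤ γ z * (dist (x z.1) (x' z.2) + 2 * δ) := fun z => by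
    have := hγ z; positivity
  rw [integral_eq_lintegral_of_nonneg_ae (ae_of_all _ fun _ => dist_nonneg)
    continuous_dist.aestronglyMeasurable]
  refine ENNReal.toReal_le_of_le_ofReal (Finset.sum_nonneg fun z _ => hterm z) ?_
  rw [blockCoupling, lintegral_finsetSum_measure, ENNReal.ofReal_sum_of_nonneg fun z _ => hterm z]
  gcongr with z
  rw [lintegral_smul_measure, smul_eq_mul, ENNReal.ofReal_mul (hγ z)]
  gcongr
  exact lintegral_dist_prod_cond_le hf hg hx hx' z.1 z.2

theorem IsDiscreteCoupling.exists_coupling_integral_dist_le [SecondCountableTopology S]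
    [OpensMeasurableSpace S] {p q : Measure S} [IsProbabilityMeasure p] [IsProbabilityMeasure q]
    {ι : Type*} [Fintype ι] [MeasurableSpace ι] [DiscreteMeasurableSpace ι] {f : S → ι}
    (hf : Measurable f) {x : ι → S} {δ : ℝ} (hδ : 0 ≤ δ) (hx : ∀ y, dist y (x (f y)) ≤ δ)
    {γ : ι × ι → ℝ}
    (hγ : IsDiscreteCoupling (fun i => p.real (f ⁻¹' {i})) (fun j => q.real (f ⁻¹' {j})) γ) :
    ∃ π : Measure (S × S), IsProbabilityMeasure π ∧ π.map Prod.fst = p ∧ π.map Prod.snd = q ∧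
      ∫ z, dist z.1 z.2 ∂π ≤ ∑ z, γ z * dist (x z.1) (x z.2) + 2 * δ := by
  have hπ₁ := blockCoupling_map_fst hf hγ
  have : IsProbabilityMeasure ((blockCoupling p q f f γ).map Prod.fst) := by
    rw [hπ₁]; infer_instance
  refine ⟨_, Measure.isProbabilityMeasure_of_map Prod.fst, hπ₁, blockCoupling_map_snd hf hγ, ?_⟩
  have hγ₁ : ∑ z, γ z = 1 := (hγ.mem_stdSimplex (sum_measureReal_fiber_eq_one hf)).2
  calc _ ≤ ∑ z, γ z * (dist (x z.1) (x z.2) + 2 * δ) :=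
        integral_dist_blockCoupling_le hf hf hδ hx hx hγ.nonneg
    _ = _ := by simp only [mul_add, Finset.sum_add_distrib, ← Finset.sum_mul, hγ₁, one_mul]

variable [CompactSpace S] [BorelSpace S]

lemma integral_sub_integral_le_integral_dist {p q : Measure S} {π : Measure (S × S)}
    [IsFiniteMeasure π] (h₁ : π.map Prod.fst = p) (h₂ : π.map Prod.snd = q) {ψ : S → ℝ}
    (hψ : LipschitzWith 1 ψ) : ∫ y, ψ y ∂p - ∫ y, ψ y ∂q ≤ ∫ z, dist z.1 z.2 ∂π := by
  subst h₁ h₂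
  have hψc := hψ.continuous
  have hψ₁ : Integrable (fun z : S × S => ψ z.1) π :=
    (hψc.comp continuous_fst).integrable_of_compactSpace
  have hψ₂ : Integrable (fun z : S × S => ψ z.2) π :=
    (hψc.comp continuous_snd).integrable_of_compactSpace
  rw [integral_map measurable_fst.aemeasurable hψc.aestronglyMeasurable,
    integral_map measurable_snd.aemeasurable hψc.aestronglyMeasurable, ← integral_sub hψ₁ hψ₂]
  refine integral_mono (hψ₁.sub hψ₂) continuous_dist.integrable_of_compactSpace fun z => ?_
  have := hψ.le_add_mul z.1 z.2
  simp only [NNReal.coe_one, one_mul] at this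
  dsimp only
  linarith

theorem exists_lipschitzWith_le_integral_sub_integral (p q : Measure S) [IsProbabilityMeasure p]
    [IsProbabilityMeasure q] {m : ℝ}
    (hm : ∀ π : Measure (S × S), IsProbabilityMeasure π → π.map Prod.fst = p →
      π.map Prod.snd = q → m ≤ ∫ z, dist z.1 z.2 ∂π)
    {ε : ℝ} (hε : 0 < ε) :
    ∃ ψ : S → ℝ, LipschitzWith 1 ψ ∧ m - ε ≤ ∫ y, ψ y ∂p - ∫ y, ψ y ∂q := by
  have : Nonempty S := nonempty_of_isProbabilityMeasure p
  obtain ⟨δ, hδ, rfl⟩ : ∃ δ, 0 < δ ∧ ε = 5 * δ := ⟨ε / 5, by positivity, by ring⟩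
  obtain ⟨n, x, f, hf, hx⟩ := exists_measurable_quantizer (S := S) hδ
  have : Nonempty (Fin n) := ⟨f (Classical.arbitrary S)⟩
  have hcost : ∀ γ, IsDiscreteCoupling (fun i => p.real (f ⁻¹' {i}))
      (fun j => q.real (f ⁻¹' {j})) γ → m - 3 * δ < ∑ z, γ z * dist (x z.1) (x z.2) := by
    intro γ hγ
    obtain ⟨π, hπ, h₁, h₂, hle⟩ :=
      hγ.exists_coupling_integral_dist_le hf hδ.le fun y => (hx y).le
    linarith [hm π hπ h₁ h₂]
  obtain ⟨u, w, huw, hval⟩ := exists_dual_eq_of_lt_cost (fun i j => dist (x i) (x j))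
    (fun _ => measureReal_nonneg) (fun _ => measureReal_nonneg) (sum_measureReal_fiber_eq_one hf)
    (sum_measureReal_fiber_eq_one hf) hcost
  set ψ : S → ℝ := fun y => ⨅ j, dist y (x j) - w j
  have hψ : LipschitzWith 1 ψ := lipschitzWith_one_ciInf_dist_sub x w
  have hu : ∀ i, u i ≤ ψ (x i) := fun i => le_ciInf fun j => by linarith [huw i j]
  have hw : ∀ j, ψ (x j) ≤ -w j := fun j => by
    simpa using ciInf_le (Finite.bddBelow_range fun k => dist (x j) (x k) - w k) j
  have hp := sum_measureReal_fiber_mul_le_integral (μ := p) (h := fun i => u i - δ) hf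
    hψ.continuous.integrable_of_compactSpace fun y => by
      have := hψ.le_add_mul (x (f y)) y
      simp only [NNReal.coe_one, one_mul, dist_comm (x (f y))] at this
      linarith [hu (f y), hx y]
  have hq := sum_measureReal_fiber_mul_le_integral (μ := q) (h := fun j => w j - δ) hf
    hψ.continuous.neg.integrable_of_compactSpace fun y => by
      have := hψ.le_add_mul y (x (f y))
      simp only [NNReal.coe_one, one_mul, Pi.neg_apply] at this ⊢
      linarith [hw (f y), hx y]
  refine ⟨ψ, hψ, ?_⟩
  simp only [mul_sub, Finset.sum_sub_distrib, ← Finset.sum_mul, sum_measureReal_fiber_eq_one hf,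
    Pi.neg_apply, integral_neg] at hp hq
  linarith

end MetricSpace

/-- Kantorovich–Rubinstein duality on a compact metric space: the
1-Wasserstein distance between probability measures `p` and `q`, defined as the infimum
over couplings `γ` of `∫ d(x,y) dγ`, equals the supremum over 1-Lipschitz functions `ψ`
of `∫ ψ dp - ∫ ψ dq`. -/
theorem kantorovich_rubinstein_duality
    {S : Type*} [MetricSpace S] [CompactSpace S] [MeasurableSpace S] [BorelSpace S]
    (p q : Measure S) [IsProbabilityMeasure p] [IsProbabilityMeasure q] :
    sInf {r : ℝ | ∃ γ : Measure (S × S), IsProbabilityMeasure γ ∧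
          γ.map Prod.fst = p ∧ γ.map Prod.snd = q ∧
          r = ∫ z, dist z.1 z.2 ∂γ}
      = sSup {r : ℝ | ∃ ψ : S → ℝ, LipschitzWith 1 ψ ∧
          r = (∫ x, ψ x ∂p) - ∫ x, ψ x ∂q} := by
  set W := {r : ℝ | ∃ γ : Measure (S × S), IsProbabilityMeasure γ ∧
    γ.map Prod.fst = p ∧ γ.map Prod.snd = q ∧ r = ∫ z, dist z.1 z.2 ∂γ}
  set D := {r : ℝ | ∃ ψ : S → ℝ, LipschitzWith 1 ψ ∧ r = (∫ x, ψ x ∂p) - ∫ x, ψ x ∂q}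
  have hweak : ∀ r ∈ W, ∀ s ∈ D, s ≤ r := by
    rintro _ ⟨π, hπ, h₁, h₂, rfl⟩ _ ⟨ψ, hψ, rfl⟩
    exact integral_sub_integral_le_integral_dist h₁ h₂ hψ
  have hW : W.Nonempty := ⟨_, p.prod q, inferInstance, by simp, by simp, rfl⟩
  have hD : D.Nonempty := ⟨_, fun _ => 0, (LipschitzWith.const 0).weaken zero_le_one, rfl⟩
  have hWbdd : BddBelow W := ⟨0, by
    rintro _ ⟨π, -, -, -, rfl⟩
    exact integral_nonneg fun _ => dist_nonneg⟩
  refine le_antisymm (le_of_forall_pos_le_add fun ε hε => ?_)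
    (csSup_le hD fun s hs => le_csInf hW fun r hr => hweak r hr s hs)
  obtain ⟨ψ, hψ, hgap⟩ := exists_lipschitzWith_le_integral_sub_integral p q
    (fun π hπ h₁ h₂ => csInf_le hWbdd ⟨π, hπ, h₁, h₂, rfl⟩) hε
  have := le_csSup ⟨_, fun s hs => hweak _ hW.some_mem s hs⟩ ⟨ψ, hψ, rfl⟩
  linarith
end

section
/- The kernel mean embedding map p ↦ μ_p = E_{x∼p}[k(x,·)] from probability measures on a compact metric space into the RKHS of a continuous universal kernel is injective. -/
open MeasureTheory RealInnerProductSpace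

/-- injectivity of the kernel mean embedding for a universal kernel. `H`
is the RKHS of a continuous universal kernel on the compact metric space `S`, given via
its continuous feature map `φ` (so elements `ψ ∈ H` act as functions by
`ψ(x) = ⟪ψ, φ x⟫`). Universality: every continuous function on `S` is uniformly
approximated by functions in `H`. Then `p ↦ μ_p = ∫ φ dp` is injective on probability
measures: `μ_p = μ_q` implies `p = q`. -/
theorem kernel_mean_embedding_injective
    {S : Type*} [MetricSpace S] [CompactSpace S] [MeasurableSpace S] [BorelSpace S]
    {H : Type*} [NormedAddCommGroup H] [InnerProductSpace ℝ H] [CompleteSpace H]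
    (φ : S → H) (hφ_cont : Continuous φ)
    (huniversal : ∀ f : C(S, ℝ), ∀ ε > 0, ∃ ψ : H, ∀ x, |⟪ψ, φ x⟫ - f x| < ε)
    (p q : Measure S) [IsProbabilityMeasure p] [IsProbabilityMeasure q]
    (hembed : (∫ x, φ x ∂p) = ∫ x, φ x ∂q) :
    p = q := by
  have hφ_int : ∀ μ : Measure S, IsProbabilityMeasure μ → Integrable φ μ := by
    intro μ hμ
    exact hφ_cont.integrable_of_hasCompactSupport (HasCompactSupport.of_compactSpace φ)
  -- integrals of continuous functions agree
  have key : ∀ f : C(S, ℝ), ∫ x, f x ∂p = ∫ x, f x ∂q := by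
    intro f
    have hfint : ∀ μ : Measure S, IsProbabilityMeasure μ → Integrable (fun x => f x) μ :=
      fun μ hμ => f.continuous.integrable_of_hasCompactSupport
        (HasCompactSupport.of_compactSpace _)
    by_contra hne
    set δ := |∫ x, f x ∂p - ∫ x, f x ∂q| with hδ
    have hδpos : 0 < δ := abs_pos.mpr (sub_ne_zero.mpr hne)
    obtain ⟨ψ, hψ⟩ := huniversal f (δ / 3) (by linarith)
    have hinner : ∀ μ : Measure S, IsProbabilityMeasure μ →
        ∫ x, ⟪ψ, φ x⟫ ∂μ = ⟪ψ, ∫ x, φ x ∂μ⟫ := by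
      intro μ hμ
      have := (innerSL ℝ ψ).integral_comp_comm (hφ_int μ hμ)
      simpa using this
    have hint_inner : ∀ μ : Measure S, IsProbabilityMeasure μ →
        Integrable (fun x => ⟪ψ, φ x⟫) μ := by
      intro μ hμ
      exact ((innerSL ℝ ψ).integrable_comp (hφ_int μ hμ))
    have hbound : ∀ μ : Measure S, IsProbabilityMeasure μ →
        |∫ x, ⟪ψ, φ x⟫ ∂μ - ∫ x, f x ∂μ| ≤ δ / 3 := by
      intro μ hμ
      rw [← integral_sub (hint_inner μ hμ) (hfint μ hμ)]
      calc |∫ x, (⟪ψ, φ x⟫ - f x) ∂μ| ≤ ∫ x, |⟪ψ, φ x⟫ - f x| ∂μ := by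
            simpa [Real.norm_eq_abs] using
              MeasureTheory.norm_integral_le_integral_norm (μ := μ) (fun x => ⟪ψ, φ x⟫ - f x)
        _ ≤ ∫ x, (δ / 3) ∂μ := by
            apply integral_mono ((hint_inner μ hμ).sub (hfint μ hμ)).abs
              (integrable_const _)
            intro x
            exact (hψ x).le
        _ = δ / 3 := by simp
    have h1 := hbound p ‹_›
    have h2 := hbound q ‹_›
    rw [hinner p ‹_›] at h1
    rw [hinner q ‹_›] at h2
    rw [hembed] at h1
    have : δ ≤ 2 * (δ / 3) := by
      calc δ = |∫ x, f x ∂p - ∫ x, f x ∂q| := hδ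
        _ = |(⟪ψ, ∫ x, φ x ∂q⟫ - ∫ x, f x ∂q) - (⟪ψ, ∫ x, φ x ∂q⟫ - ∫ x, f x ∂p)| := by
            ring_nf
        _ ≤ |⟪ψ, ∫ x, φ x ∂q⟫ - ∫ x, f x ∂q| + |⟪ψ, ∫ x, φ x ∂q⟫ - ∫ x, f x ∂p| :=
            abs_sub _ _
        _ ≤ 2 * (δ / 3) := by linarith
    linarith
  -- conclude using lintegrals of bounded continuous nnreal functions
  refine ext_of_forall_lintegral_eq_of_IsFiniteMeasure (fun f => ?_)
  have hf : ∫ x, ((f x : ℝ)) ∂p = ∫ x, ((f x : ℝ)) ∂q :=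
    key ⟨fun x => (f x : ℝ), by continuity⟩
  have h1 := BoundedContinuousFunction.toReal_lintegral_coe_eq_integral f p
  have h2 := BoundedContinuousFunction.toReal_lintegral_coe_eq_integral f q
  have fin1 := BoundedContinuousFunction.lintegral_lt_top_of_nnreal p f
  have fin2 := BoundedContinuousFunction.lintegral_lt_top_of_nnreal q f
  rw [← ENNReal.toReal_eq_toReal_iff' fin1.ne fin2.ne]
  rw [h1, h2, hf]
end
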